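/- Let Compress be the LZ77 compression function with sliding window size W ≤ n over a finite alphabet Σ. Then the global sensitivity for strings of length n satisfies GS ≤ ((∛81/2)·W^{2/3} + (∛9/2)·W^{1/3} + 3)·(2⌈log₂ n⌉ + ⌈log₂|Σ|⌉). -/
import Mathlib


/-- A single LZ77 block `[q, len, c]`. -/
structure LZBlock (α : Type*) where
  q : ℕ
  len : ℕ
  c : α

/-- `s_i` (1-indexed start position of the `i`-th block, `i` 0-indexed). -/
def blockStart {α : Type*} (B : List (LZBlock α)) (i : ℕ) : ℕ :=
  1 + ((B.take i).map (fun b => b.len + 1)).sum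

/-- `f_i` (1-indexed final position of the `i`-th block, `i` 0-indexed). -/
def blockFin {α : Type*} (B : List (LZBlock α)) (i : ℕ) : ℕ :=
  ((B.take (i + 1)).map (fun b => b.len + 1)).sum

/-- `ℓ_i`, recovered as `f_i - s_i`. -/
def lenAt {α : Type*} (B : List (LZBlock α)) (i : ℕ) : ℕ :=
  blockFin B i - blockStart B i

/-- Non-overlapping LZ77 parse, sliding window `W`, of the length-`n` string `w`
(1-indexed positions). -/
def IsLZ77Parse {α : Type*} (W n : ℕ) (w : ℕ → α) (B : List (LZBlock α)) : Prop :=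
  ((B.map (fun b => b.len + 1)).sum = n) ∧
  ∀ i : Fin B.length,
    ((B.get i).c = w (blockStart B i.1 + (B.get i).len)) ∧
    ((B.get i).len = 0 → (B.get i).q = 0) ∧
    (0 < (B.get i).len →
      1 ≤ (B.get i).q ∧
      blockStart B i.1 ≤ (B.get i).q + W ∧
      (B.get i).q + (B.get i).len ≤ blockStart B i.1 ∧
      ∀ d < (B.get i).len, w ((B.get i).q + d) = w (blockStart B i.1 + d)) ∧
    (blockStart B i.1 + (B.get i).len + 1 ≤ n →
      ¬ ∃ q', 1 ≤ q' ∧ blockStart B i.1 ≤ q' + W ∧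
          q' + (B.get i).len + 1 ≤ blockStart B i.1 ∧
          ∀ d ≤ (B.get i).len, w (q' + d) = w (blockStart B i.1 + d))

/-- LZ77 parse with self-referencing (unbounded window). -/
def IsLZ77SRParse {α : Type*} (n : ℕ) (w : ℕ → α) (B : List (LZBlock α)) : Prop :=
  ((B.map (fun b => b.len + 1)).sum = n) ∧
  ∀ i : Fin B.length,
    ((B.get i).c = w (blockStart B i.1 + (B.get i).len)) ∧
    ((B.get i).len = 0 → (B.get i).q = 0) ∧
    (0 < (B.get i).len →
      1 ≤ (B.get i).q ∧
      (B.get i).q < blockStart B i.1 ∧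
      ∀ d < (B.get i).len, w ((B.get i).q + d) = w (blockStart B i.1 + d)) ∧
    (blockStart B i.1 + (B.get i).len + 1 ≤ n →
      ¬ ∃ q', 1 ≤ q' ∧ q' < blockStart B i.1 ∧
          ∀ d ≤ (B.get i).len, w (q' + d) = w (blockStart B i.1 + d))

/-- `w ∼ w'`: strings of length `n` differing in exactly one position. -/
def Neighbor {α : Type*} (n : ℕ) (w w' : ℕ → α) : Prop :=
  ∃ j, 1 ≤ j ∧ j ≤ n ∧ w j ≠ w' j ∧ ∀ i, i ≠ j → w i = w' i

/-- `M_i`: the set of (0-indexed) blocks of `B'` that start inside block `i` of `B`. -/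
def Mset {α : Type*} (B B' : List (LZBlock α)) (i : ℕ) : Finset ℕ :=
  (Finset.range B'.length).filter
    (fun k => blockStart B i ≤ blockStart B' k ∧ blockStart B' k ≤ blockFin B i)

/-- Indices of type-`m` blocks of `B` (relative to `B'`). -/
def typeSet {α : Type*} (B B' : List (LZBlock α)) (m : ℕ) : Finset ℕ :=
  (Finset.range B.length).filter (fun i => (Mset B B' i).card = m)

/-- Number of bits used to encode each block. -/
def codeLen (n cardS : ℕ) : ℕ :=
  2 * Nat.clog 2 n + Nat.clog 2 cardS

namespace Scratch

variable {α : Type*}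

lemma sum_take_succ_getD (A : List ℕ) (i : ℕ) :
    (A.take (i+1)).sum = (A.take i).sum + A.getD i 0 := by
  rcases lt_or_ge i A.length with h | h
  · rw [List.sum_take_succ _ _ h, List.getD_eq_getElem _ _ h]
  · rw [List.take_of_length_le h, List.take_of_length_le (by omega),
      List.getD_eq_default _ _ h]
    simp

lemma blockStart_succ (B : List (LZBlock α)) (i : ℕ) :
    blockStart B (i+1) = blockStart B i + (B.map (fun b => b.len + 1)).getD i 0 := by
  unfold blockStart
  rw [List.map_take, List.map_take, sum_take_succ_getD]
  omega

lemma blockStart_getD (B : List (LZBlock α)) (i : ℕ) (h : i < B.length) :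
    (B.map (fun b => b.len + 1)).getD i 0 = (B.get ⟨i, h⟩).len + 1 := by
  rw [List.getD_eq_getElem _ _ (by simpa using h)]
  simp

lemma blockStart_succ' (B : List (LZBlock α)) (i : ℕ) (h : i < B.length) :
    blockStart B (i+1) = blockStart B i + (B.get ⟨i, h⟩).len + 1 := by
  rw [blockStart_succ, blockStart_getD B i h]; omega

lemma blockStart_mono (B : List (LZBlock α)) : Monotone (blockStart B) := by
  apply monotone_nat_of_le_succ
  intro i; rw [blockStart_succ]; omega

lemma blockStart_le_n (B : List (LZBlock α)) (i : ℕ) :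
    blockStart B (i+1) ≤ 1 + (B.map (fun b => b.len + 1)).sum := by
  unfold blockStart
  rw [List.map_take]
  have : ((B.map (fun b => b.len + 1)).take (i+1)).sum
      ≤ (B.map (fun b => b.len + 1)).sum := by
    conv_rhs => rw [← List.take_append_drop (i+1) (B.map (fun b => b.len + 1))]
    rw [List.sum_append]
    omega
  omega

lemma blockStart_one (B : List (LZBlock α)) : blockStart B 0 = 1 := by
  simp [blockStart]

end Scratch

namespace Scratch2
open Scratch

variable {α : Type*}

/-- index of the block containing position `p`. -/
noncomputable def ik (B : List (LZBlock α)) (p : ℕ) : ℕ :=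
  Nat.findGreatest (fun i => blockStart B i ≤ p) B.length

lemma ik_spec (B : List (LZBlock α)) (p : ℕ) (hp1 : 1 ≤ p)
    (hpn : p < blockStart B B.length) :
    ik B p < B.length ∧ blockStart B (ik B p) ≤ p ∧ p < blockStart B (ik B p + 1) := by
  classical
  have hg : ik B p = Nat.findGreatest (fun i => blockStart B i ≤ p) B.length := rfl
  have hP0 : blockStart B 0 ≤ p := by rw [blockStart_one]; exact hp1
  have hspec : blockStart B (ik B p) ≤ p := by
    rw [hg]
    exact Nat.findGreatest_spec (P := fun i => blockStart B i ≤ p)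
      (m := 0) (Nat.zero_le _) hP0
  have hle : ik B p ≤ B.length := by
    rw [hg]; exact Nat.findGreatest_le _
  have hne : ik B p ≠ B.length := by
    intro h
    rw [h] at hspec; omega
  have hlt : ik B p < B.length := lt_of_le_of_ne hle hne
  refine ⟨hlt, hspec, ?_⟩
  have hgr : ¬ blockStart B (ik B p + 1) ≤ p := by
    apply Nat.findGreatest_is_greatest (P := fun i => blockStart B i ≤ p)
      (n := B.length) (by omega) (by omega)
  omega

lemma ik_order (B : List (LZBlock α)) {i i' p p' : ℕ}
    (h1 : blockStart B i ≤ p) (h2 : p < blockStart B (i+1))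
    (h1' : blockStart B i' ≤ p') (h2' : p' < blockStart B (i'+1))
    (hpp' : p ≤ p') : i ≤ i' := by
  by_contra hc
  push_neg at hc
  have : blockStart B (i'+1) ≤ blockStart B i := blockStart_mono B (by omega)
  omega

lemma ik_unique (B : List (LZBlock α)) {i p : ℕ}
    (h1 : blockStart B i ≤ p) (h2 : p < blockStart B (i+1))
    (hp1 : 1 ≤ p) (hpn : p < blockStart B B.length) :
    ik B p = i := by
  obtain ⟨_, ha, hb⟩ := ik_spec B p hp1 hpn
  have := ik_order B h1 h2 ha hb le_rfl
  have := ik_order B ha hb h1 h2 le_rfl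
  omega

end Scratch2

namespace Scratch3
open Scratch Scratch2

variable {α : Type*}

lemma lemmaA {W n j : ℕ} {w w' : ℕ → α} {B B' : List (LZBlock α)}
    (hB : IsLZ77Parse W n w B) (hB' : IsLZ77Parse W n w' B')
    (hww' : ∀ x, x ≠ j → w x = w' x)
    {i k : ℕ} (hi : i < B.length) (hk1 : k + 1 < B'.length)
    (h1 : blockStart B i ≤ blockStart B' k)
    (h2 : blockStart B' (k+1) < blockStart B (i+1)) :
    (blockStart B' k ≤ j ∧ j < blockStart B' (k+1)) ∨
    (∃ δ, j = (B.get ⟨i, hi⟩).q + δ ∧ δ < (B.get ⟨i, hi⟩).len ∧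
       blockStart B' k ≤ blockStart B i + δ ∧ blockStart B i + δ < blockStart B' (k+1)) := by
  by_contra hcon
  have hnA : ¬ (blockStart B' k ≤ j ∧ j < blockStart B' (k+1)) :=
    fun h => hcon (Or.inl h)
  have hnB : ∀ δ, j = (B.get ⟨i, hi⟩).q + δ → δ < (B.get ⟨i, hi⟩).len →
      blockStart B' k ≤ blockStart B i + δ → blockStart B i + δ < blockStart B' (k+1) → False :=
    fun δ ha hb hc hd => hcon (Or.inr ⟨δ, ha, hb, hc, hd⟩)
  have hkk : k < B'.length := by omega
  set li := (B.get ⟨i, hi⟩).len with hli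
  set qi := (B.get ⟨i, hi⟩).q with hqi
  set lk := (B'.get ⟨k, hkk⟩).len with hlk
  have hSsucc : blockStart B (i+1) = blockStart B i + li + 1 := blockStart_succ' B i hi
  have hS'succ : blockStart B' (k+1) = blockStart B' k + lk + 1 := blockStart_succ' B' k hkk
  have hS'succ2 : blockStart B' (k+2) = blockStart B' (k+1) + (B'.get ⟨k+1, hk1⟩).len + 1 :=
    blockStart_succ' B' (k+1) hk1
  have hS'le : blockStart B' (k+2) ≤ 1 + n := by
    have h3 : blockStart B' (k+2) ≤ 1 + (B'.map (fun b => b.len + 1)).sum :=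
      blockStart_le_n B' (k+1)
    rw [hB'.1] at h3
    exact h3
  have hlipos : 0 < li := by omega
  obtain ⟨hq1, hqW, hqle, hcopy⟩ := (hB.2 ⟨i, hi⟩).2.2.1 hlipos
  simp only [Fin.val_mk] at hq1 hqW hqle hcopy
  have Hmax := (hB'.2 ⟨k, hkk⟩).2.2.2
  simp only [Fin.val_mk] at Hmax
  replace Hmax := Hmax (by omega)
  apply Hmax
  obtain ⟨o, ho⟩ : ∃ o, blockStart B' k = blockStart B i + o := ⟨_, (Nat.add_sub_cancel' h1).symm⟩
  have holk : o + lk < li := by omega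
  refine ⟨qi + o, by omega, by omega, by omega, ?_⟩
  intro d hd
  have hyl : o + d < li := by omega
  have ht1 : blockStart B' k + d = blockStart B i + (o + d) := by omega
  have ht2 : qi + o + d = qi + (o + d) := by omega
  have htgt : blockStart B i + (o + d) ≠ j := by
    intro hj
    exact hnA ⟨by omega, by omega⟩
  have hsrc : qi + (o + d) ≠ j := by
    intro hj
    exact hnB (o + d) hj.symm hyl (by omega) (by omega)
  rw [ht1, ht2]
  rw [← hww' _ hsrc, ← hww' _ htgt]
  exact hcopy (o + d) hyl

end Scratch3

namespace Scratch4
open Scratch Scratch2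

variable {α : Type*}

lemma one_le_blockStart (B : List (LZBlock α)) (i : ℕ) : 1 ≤ blockStart B i := by
  unfold blockStart; omega

lemma pairLemma {W n j : ℕ} {w w' : ℕ → α} {B B' : List (LZBlock α)}
    (hB : IsLZ77Parse W n w B) (hB' : IsLZ77Parse W n w' B')
    (hww' : ∀ x, x ≠ j → w x = w' x)
    {i i' kb δa δb Rb : ℕ} (hi : i < B.length) (hi' : i' < B.length)
    (hkb1 : kb + 1 < B'.length)
    (hii' : blockStart B (i+1) ≤ blockStart B i')
    (hja : j = (B.get ⟨i, hi⟩).q + δa) (hδa : δa < (B.get ⟨i, hi⟩).len)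
    (hjb : j = (B.get ⟨i', hi'⟩).q + δb) (hδb : δb < (B.get ⟨i', hi'⟩).len)
    (hspan1 : blockStart B i' ≤ blockStart B' kb)
    (hspan2 : blockStart B' (kb+1) < blockStart B (i'+1))
    (hpb1 : blockStart B' kb ≤ blockStart B i' + δb)
    (hRb : blockStart B' (kb+1) = blockStart B i' + δb + Rb + 1)
    (hdle : δb ≤ δa)
    (hRle : δa + Rb + 1 ≤ (B.get ⟨i, hi⟩).len) :
    False := by
  have hkb : kb < B'.length := by omega
  set qa := (B.get ⟨i, hi⟩).q with hqa
  set la := (B.get ⟨i, hi⟩).len with hla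
  set qb := (B.get ⟨i', hi'⟩).q with hqb
  set lb := (B.get ⟨i', hi'⟩).len with hlb
  set lkb := (B'.get ⟨kb, hkb⟩).len with hlkb
  have hSsucci : blockStart B (i+1) = blockStart B i + la + 1 := blockStart_succ' B i hi
  have hSsucci' : blockStart B (i'+1) = blockStart B i' + lb + 1 := blockStart_succ' B i' hi'
  have hS'succ : blockStart B' (kb+1) = blockStart B' kb + lkb + 1 := blockStart_succ' B' kb hkb
  have hS'succ2 : blockStart B' (kb+2) = blockStart B' (kb+1) + (B'.get ⟨kb+1, hkb1⟩).len + 1 :=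
    blockStart_succ' B' (kb+1) hkb1
  have hS'le : blockStart B' (kb+2) ≤ 1 + n := by
    have h3 : blockStart B' (kb+2) ≤ 1 + (B'.map (fun b => b.len + 1)).sum :=
      blockStart_le_n B' (kb+1)
    rw [hB'.1] at h3
    exact h3
  obtain ⟨hq1a, hqWa, hqlea, hcopya⟩ := (hB.2 ⟨i, hi⟩).2.2.1 (by omega)
  simp only [Fin.val_mk] at hq1a hqWa hqlea hcopya
  obtain ⟨hq1b, hqWb, hqleb, hcopyb⟩ := (hB.2 ⟨i', hi'⟩).2.2.1 (by omega)
  simp only [Fin.val_mk] at hq1b hqWb hqleb hcopyb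
  have Hmax := (hB'.2 ⟨kb, hkb⟩).2.2.2
  simp only [Fin.val_mk] at Hmax
  replace Hmax := Hmax (by omega)
  apply Hmax
  -- split δ's
  obtain ⟨Lb, hLbeq⟩ : ∃ L, blockStart B' kb + L = blockStart B i' + δb :=
    ⟨blockStart B i' + δb - blockStart B' kb, by omega⟩
  have hLbδb : Lb ≤ δb := by
    have := one_le_blockStart B i'
    omega
  obtain ⟨db, hdb⟩ : ∃ db, Lb + db = δb := ⟨δb - Lb, by omega⟩
  obtain ⟨da, hda⟩ : ∃ da, Lb + da = δa := ⟨δa - Lb, by omega⟩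
  have hlkbeq : lkb = Lb + Rb := by omega
  have hδbRb : δb + Rb < lb := by omega
  have hSi1 : 1 ≤ blockStart B i := one_le_blockStart B i
  have hjSi : j + 1 ≤ blockStart B i := by omega
  have hjSi' : j + 1 ≤ blockStart B i' := by omega
  -- the witness source position
  refine ⟨blockStart B i + da, by omega, by omega, by omega, ?_⟩
  intro d hd
  have hoalt : da + d < la := by omega
  have hoblt : db + d < lb := by omega
  have htpos : blockStart B' kb + d = blockStart B i' + (db + d) := by omega
  have hspos : blockStart B i + da + d = blockStart B i + (da + d) := by omega
  have htne : blockStart B i' + (db + d) ≠ j := by omega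
  have hsne : blockStart B i + (da + d) ≠ j := by omega
  rw [htpos, hspos, ← hww' _ hsne, ← hww' _ htne,
    ← hcopya (da + d) hoalt, ← hcopyb (db + d) hoblt]
  congr 1
  omega

end Scratch4

namespace Scratch5

lemma tele (S g : ℕ → ℕ) (h : ∀ i, S i + g i ≤ S (i+1)) :
    ∀ a b, a ≤ b → S a + ∑ i ∈ Finset.Ico a b, g i ≤ S b := by
  intro a b hab
  induction b, hab using Nat.le_induction with
  | base => simp
  | succ b hab ih =>
    rw [Finset.sum_Ico_succ_top hab]
    have := h b
    omega

lemma countPairs (P : Finset (ℕ × ℕ)) (W : ℕ)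
    (h : ∑ p ∈ P, (p.1 + p.2 + 2) ≤ W) :
    (P.card : ℝ) ≤ 2 * (W : ℝ) ^ ((2:ℝ)/3) := by
  rcases Nat.eq_zero_or_pos W with hW0 | hWpos
  · have hPe : P = ∅ := by
      by_contra hne
      obtain ⟨p, hp⟩ := Finset.nonempty_of_ne_empty hne
      have : (2:ℕ) ≤ ∑ p ∈ P, (p.1 + p.2 + 2) :=
        le_trans (by omega) (Finset.single_le_sum (f := fun p => p.1 + p.2 + 2)
          (fun _ _ => Nat.zero_le _) hp)
      omega
    subst hPe
    simp
    positivity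
  · have hex : ∃ c, W ≤ c^3 := ⟨W, Nat.le_self_pow (by norm_num) W⟩
    classical
    set c := Nat.find hex with hcdef
    have hc : W ≤ c^3 := Nat.find_spec hex
    have hc1 : 1 ≤ c := by
      rcases Nat.eq_zero_or_pos c with h0 | h1
      · rw [h0] at hc; simp at hc; omega
      · exact h1
    have hcm : (c-1)^3 < W := by
      have := Nat.find_min hex (m := c - 1) (by omega)
      omega
    set P₁ := P.filter (fun p => c ≤ p.1 + p.2 + 2) with hP1
    set P₂ := P.filter (fun p => ¬ c ≤ p.1 + p.2 + 2) with hP2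
    have hcards : P₁.card + P₂.card = P.card :=
      Finset.card_filter_add_card_filter_not _
    have hb1 : P₁.card * c ≤ W := by
      calc P₁.card * c = ∑ _p ∈ P₁, c := by rw [Finset.sum_const, smul_eq_mul, mul_comm]
      _ ≤ ∑ p ∈ P₁, (p.1 + p.2 + 2) :=
          Finset.sum_le_sum (fun p hp => (Finset.mem_filter.1 hp).2)
      _ ≤ ∑ p ∈ P, (p.1 + p.2 + 2) :=
          Finset.sum_le_sum_of_subset (Finset.filter_subset _ _)
      _ ≤ W := h
    have hb2 : P₂.card ≤ (c-1) * (c-1) := by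
      have hsub : P₂ ⊆ (Finset.range (c-1)) ×ˢ (Finset.range (c-1)) := by
        intro p hp
        have := (Finset.mem_filter.1 hp).2
        rw [Finset.mem_product, Finset.mem_range, Finset.mem_range]
        omega
      calc P₂.card ≤ _ := Finset.card_le_card hsub
      _ = (c-1) * (c-1) := by rw [Finset.card_product, Finset.card_range]
    -- real arithmetic
    have hWR : (0:ℝ) < (W:ℝ) := by exact_mod_cast hWpos
    have hcR : (0:ℝ) < (c:ℝ) := by exact_mod_cast hc1
    have hpow : ∀ x : ℝ, 0 ≤ x → (x^(3:ℕ)) ^ ((1:ℝ)/3) = x := by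
      intro x hx
      rw [← Real.rpow_natCast x 3, ← Real.rpow_mul hx]
      norm_num
    have hWc : (W:ℝ) ^ ((1:ℝ)/3) ≤ (c:ℝ) := by
      have h1 : (W:ℝ) ^ ((1:ℝ)/3) ≤ ((c:ℝ)^(3:ℕ)) ^ ((1:ℝ)/3) := by
        apply Real.rpow_le_rpow (by positivity) (by exact_mod_cast hc) (by norm_num)
      rwa [hpow _ (le_of_lt hcR)] at h1
    have hcW : ((c:ℝ) - 1) ≤ (W:ℝ) ^ ((1:ℝ)/3) := by
      have hcast : ((c:ℝ) - 1) = ((c - 1 : ℕ) : ℝ) := by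
        rw [Nat.cast_sub hc1]; norm_num
      rw [hcast]
      have h1 : (((c-1:ℕ):ℝ)^(3:ℕ)) ^ ((1:ℝ)/3) ≤ (W:ℝ) ^ ((1:ℝ)/3) := by
        apply Real.rpow_le_rpow (by positivity) _ (by norm_num)
        exact_mod_cast le_of_lt hcm
      rwa [hpow _ (by positivity)] at h1
    have hsplit : (W:ℝ) ^ ((2:ℝ)/3) * (W:ℝ) ^ ((1:ℝ)/3) = (W:ℝ) := by
      rw [← Real.rpow_add hWR]
      norm_num
    have hterm1 : (P₁.card : ℝ) ≤ (W:ℝ) ^ ((2:ℝ)/3) := by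
      have h1 : (P₁.card : ℝ) * (c:ℝ) ≤ (W:ℝ) := by exact_mod_cast hb1
      have h2 : (W:ℝ) ≤ (W:ℝ) ^ ((2:ℝ)/3) * (c:ℝ) := by
        calc (W:ℝ) = (W:ℝ) ^ ((2:ℝ)/3) * (W:ℝ) ^ ((1:ℝ)/3) := hsplit.symm
        _ ≤ (W:ℝ) ^ ((2:ℝ)/3) * (c:ℝ) :=
            mul_le_mul_of_nonneg_left hWc (Real.rpow_nonneg (le_of_lt hWR) _)
      have := le_trans h1 h2
      exact le_of_mul_le_mul_right this hcR
    have hterm2 : (P₂.card : ℝ) ≤ (W:ℝ) ^ ((2:ℝ)/3) := by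
      have h1 : (P₂.card : ℝ) ≤ ((c:ℝ) - 1) * ((c:ℝ) - 1) := by
        have : ((c:ℝ) - 1) * ((c:ℝ) - 1) = (((c-1:ℕ) * (c-1:ℕ) : ℕ) : ℝ) := by
          push_cast [Nat.cast_sub hc1]
          ring
        rw [this]
        exact_mod_cast hb2
      have h2 : ((c:ℝ) - 1) * ((c:ℝ) - 1) ≤ (W:ℝ) ^ ((1:ℝ)/3) * (W:ℝ) ^ ((1:ℝ)/3) := by
        have hnn : (0:ℝ) ≤ (c:ℝ) - 1 := by
          have : (1:ℝ) ≤ (c:ℝ) := by exact_mod_cast hc1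
          linarith
        exact mul_le_mul hcW hcW hnn (by positivity)
      have h3 : (W:ℝ) ^ ((1:ℝ)/3) * (W:ℝ) ^ ((1:ℝ)/3) = (W:ℝ) ^ ((2:ℝ)/3) := by
        rw [← Real.rpow_add hWR]
        norm_num
      calc (P₂.card : ℝ) ≤ _ := h1
      _ ≤ _ := h2
      _ = _ := h3
    have : (P.card : ℝ) = (P₁.card : ℝ) + (P₂.card : ℝ) := by exact_mod_cast hcards.symm
    rw [this]
    linarith

end Scratch5

namespace Scratch6
open Scratch Scratch2 Scratch3 Scratch4 Scratch5

variable {α : Type*}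

theorem direction {W n j : ℕ} {w w' : ℕ → α} (hj1 : 1 ≤ j)
    (hww' : ∀ x, x ≠ j → w x = w' x)
    {B B' : List (LZBlock α)} (hB : IsLZ77Parse W n w B) (hB' : IsLZ77Parse W n w' B') :
    (B'.length : ℝ) ≤ (B.length : ℝ) + 2 + 2 * (W : ℝ) ^ ((2:ℝ)/3) := by
  classical
  set t := B.length with ht
  set t' := B'.length with ht'
  -- total length
  have htot : blockStart B B.length = 1 + n := by
    unfold blockStart
    rw [List.take_length, hB.1]
  have htot' : blockStart B' B'.length = 1 + n := by
    unfold blockStart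
    rw [List.take_length, hB'.1]
  have hS'lt : ∀ k, k < t' → blockStart B' k < blockStart B B.length := by
    intro k hk
    have h1 : blockStart B' (k+1) = blockStart B' k + (B'.get ⟨k, hk⟩).len + 1 :=
      blockStart_succ' B' k hk
    have h2 : blockStart B' (k+1) ≤ blockStart B' B'.length := blockStart_mono B' (by omega)
    omega
  -- the block of B containing the start of block k of B'
  set ikf : ℕ → ℕ := fun k => ik B (blockStart B' k) with hikf
  have hloc : ∀ k, k < t' → ikf k < t ∧ blockStart B (ikf k) ≤ blockStart B' k ∧
      blockStart B' k < blockStart B (ikf k + 1) := by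
    intro k hk
    exact ik_spec B _ (one_le_blockStart B' k) (hS'lt k hk)
  -- total accessor functions
  set Q : ℕ → ℕ := fun i => if h : i < B.length then (B.get ⟨i, h⟩).q else 0 with hQdef
  set LEN : ℕ → ℕ := fun i => if h : i < B.length then (B.get ⟨i, h⟩).len else 0 with hLENdef
  have hQ : ∀ i (h : i < B.length), Q i = (B.get ⟨i, h⟩).q := by
    intro i h; rw [hQdef]; simp [h]
  have hLEN : ∀ i (h : i < B.length), LEN i = (B.get ⟨i, h⟩).len := by
    intro i h; rw [hLENdef]; simp [h]
  set NF : ℕ → Prop := fun k => k + 1 < t' ∧ blockStart B' (k+1) < blockStart B (ikf k + 1)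
    with hNF
  set SRC : ℕ → Prop := fun k => ∃ δ, j = Q (ikf k) + δ ∧ δ < LEN (ikf k) ∧
      blockStart B' k ≤ blockStart B (ikf k) + δ ∧
      blockStart B (ikf k) + δ < blockStart B' (k+1) with hSRC
  -- classification via lemmaA
  have hclass : ∀ k, k < t' → NF k → ¬ SRC k →
      blockStart B' k ≤ j ∧ j < blockStart B' (k+1) := by
    intro k hk hnf hnsrc
    obtain ⟨hik, hb1, hb2⟩ := hloc k hk
    have := lemmaA hB hB' hww' hik hnf.1 hb1 hnf.2
    rcases this with h | ⟨δ, h1, h2, h3, h4⟩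
    · exact h
    · exact absurd ⟨δ, by rw [hQ _ hik]; exact h1, by rw [hLEN _ hik]; exact h2, h3, h4⟩ hnsrc
  set KS : Finset ℕ := (Finset.range t').filter (fun k => NF k ∧ SRC k) with hKS
  set marked : Finset ℕ := KS.image ikf with hmarked
  set m := marked.card with hm
  set f : ℕ → ℕ := fun k => if NF k ∧ SRC k then t + 1 + ikf k else if NF k then t else ikf k
    with hf
  -- injectivity helper
  have key : ∀ k k', k < k' → k' < t' → f k = f k' → False := by
    intro k k' hkk' hk' hfeq
    have hk : k < t' := by omega
    obtain ⟨hik, hb1, hb2⟩ := hloc k hk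
    obtain ⟨hik', hb1', hb2'⟩ := hloc k' hk'
    have hmono' : blockStart B' (k+1) ≤ blockStart B' k' := blockStart_mono B' (by omega)
    rw [hf] at hfeq
    simp only [] at hfeq
    by_cases h1 : NF k ∧ SRC k <;> by_cases h2 : NF k' ∧ SRC k'
    · -- both source-type
      rw [if_pos h1, if_pos h2] at hfeq
      have hieq : ikf k = ikf k' := by omega
      obtain ⟨δ, hδ1, hδ2, hδ3, hδ4⟩ := h1.2
      obtain ⟨δ', hδ1', hδ2', hδ3', hδ4'⟩ := h2.2
      rw [← hieq] at hδ1' hδ3'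
      have : δ = δ' := by omega
      omega
    · rw [if_pos h1] at hfeq
      by_cases h3 : NF k'
      · rw [if_neg h2, if_pos h3] at hfeq; omega
      · rw [if_neg h2, if_neg h3] at hfeq; omega
    · rw [if_neg h1, if_pos h2] at hfeq
      by_cases h3 : NF k
      · -- k is j-type, k' is source-type: f k = t, f k' = t+1+... 
        rw [if_pos h3] at hfeq; omega
      · rw [if_neg h3] at hfeq; omega
    · rw [if_neg h1, if_neg h2] at hfeq
      by_cases h3 : NF k <;> by_cases h4 : NF k'
      · -- both j-type
        rw [if_pos h3, if_pos h4] at hfeq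
        have hj' : ¬ SRC k := fun hs => h1 ⟨h3, hs⟩
        have hj'' : ¬ SRC k' := fun hs => h2 ⟨h4, hs⟩
        have c1 := hclass k hk h3 hj'
        have c2 := hclass k' hk' h4 hj''
        omega
      · rw [if_pos h3, if_neg h4] at hfeq
        -- k' not NF: but k' might be final; f k = t, f k' = ikf k' < t
        omega
      · rw [if_neg h3, if_pos h4] at hfeq
        omega
      · rw [if_neg h3, if_neg h4] at hfeq
        -- both final: ikf k = ikf k'; derive NF k
        have hieq : ikf k = ikf k' := hfeq
        apply h3
        constructor
        · omega
        · rw [hieq]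
          omega
  -- counting: t' ≤ t + 1 + m
  have hcount : t' ≤ t + 1 + m := by
    have hinj : Set.InjOn f (Finset.range t') := by
      intro a ha b hb hab
      simp only [Finset.coe_range, Set.mem_Iio] at ha hb
      rcases lt_trichotomy a b with h | h | h
      · exact (key a b h hb hab).elim
      · exact h
      · exact (key b a h ha hab.symm).elim
    have hmaps : ∀ k ∈ Finset.range t',
        f k ∈ (Finset.range t ∪ {t}) ∪ marked.image (fun i => t + 1 + i) := by
      intro k hk
      rw [Finset.mem_range] at hk
      rw [hf]
      simp only []
      by_cases h1 : NF k ∧ SRC k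
      · rw [if_pos h1]
        apply Finset.mem_union_right
        apply Finset.mem_image_of_mem
        rw [hmarked]
        apply Finset.mem_image_of_mem
        rw [hKS]
        exact Finset.mem_filter.2 ⟨Finset.mem_range.2 hk, h1⟩
      · rw [if_neg h1]
        by_cases h2 : NF k
        · rw [if_pos h2]
          exact Finset.mem_union_left _ (Finset.mem_union_right _ (Finset.mem_singleton_self t))
        · rw [if_neg h2]
          exact Finset.mem_union_left _
            (Finset.mem_union_left _ (Finset.mem_range.2 (hloc k hk).1))
    have h1 : (Finset.range t').card ≤
        ((Finset.range t ∪ {t}) ∪ marked.image (fun i => t + 1 + i)).card :=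
      Finset.card_le_card_of_injOn f hmaps hinj
    have h2 : ((Finset.range t ∪ {t}) ∪ marked.image (fun i => t + 1 + i)).card
        ≤ (t + 1) + m := by
      calc ((Finset.range t ∪ {t}) ∪ marked.image (fun i => t + 1 + i)).card
          ≤ (Finset.range t ∪ {t}).card + (marked.image (fun i => t + 1 + i)).card :=
            Finset.card_union_le _ _
        _ ≤ ((Finset.range t).card + ({t} : Finset ℕ).card) + marked.card := by
            have := Finset.card_union_le (Finset.range t) ({t} : Finset ℕ)
            have := Finset.card_image_le (s := marked) (f := fun i => t + 1 + i)
            omega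
        _ = (t + 1) + m := by simp [hm]
    rw [Finset.card_range] at h1
    omega
  -- attributes
  set Dδ : ℕ → ℕ := fun i => j - Q i with hDδ
  set Rf : ℕ → ℕ := fun i => if h : ∃ k, k ∈ KS ∧ ikf k = i then
      blockStart B' (h.choose + 1) - 1 - (blockStart B i + Dδ i) else 0 with hRf
  have hMK : ∀ i ∈ marked, ∃ k₀, (k₀ + 1 < t') ∧ ikf k₀ = i ∧ i < B.length ∧
      blockStart B i ≤ blockStart B' k₀ ∧
      blockStart B' (k₀+1) < blockStart B (i+1) ∧
      blockStart B' k₀ ≤ blockStart B i + Dδ i ∧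
      blockStart B' (k₀+1) = blockStart B i + Dδ i + Rf i + 1 ∧
      j = Q i + Dδ i ∧ Dδ i < LEN i ∧
      Q i + LEN i ≤ blockStart B i ∧ blockStart B i ≤ Q i + W ∧ 1 ≤ Q i ∧
      Dδ i + Rf i + 1 ≤ LEN i := by
    intro i hi
    rw [hmarked, Finset.mem_image] at hi
    have hex : ∃ k, k ∈ KS ∧ ikf k = i := by
      obtain ⟨k, hk1, hk2⟩ := hi
      exact ⟨k, hk1, hk2⟩
    obtain ⟨hkKS, hkik⟩ := hex.choose_spec
    set k₀ := hex.choose with hk₀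
    rw [hKS, Finset.mem_filter, Finset.mem_range] at hkKS
    obtain ⟨hk₀t', hNFk, hSRCk⟩ := hkKS
    obtain ⟨hikt, hbl1, hbl2⟩ := hloc k₀ hk₀t'
    rw [hkik] at hbl1 hbl2 hikt
    obtain ⟨δ, hδ1, hδ2, hδ3, hδ4⟩ := hSRCk
    rw [hkik] at hδ1 hδ2 hδ3 hδ4
    have hδD : δ = Dδ i := by rw [hDδ]; simp only []; omega
    have hNF2 : blockStart B' (k₀+1) < blockStart B (i + 1) := by
      have := hNFk.2
      rw [hkik] at this
      exact this
    have hRfi : Rf i = blockStart B' (k₀ + 1) - 1 - (blockStart B i + Dδ i) := by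
      rw [hRf]; simp only []
      rw [dif_pos hex]
    have hlen_pos : 0 < (B.get ⟨i, hikt⟩).len := by
      rw [← hLEN _ hikt]; omega
    obtain ⟨hq1, hqW, hqle, _⟩ := (hB.2 ⟨i, hikt⟩).2.2.1 hlen_pos
    simp only [Fin.val_mk] at hq1 hqW hqle
    rw [← hQ _ hikt] at hq1 hqW hqle
    rw [← hLEN _ hikt] at hqle
    have hSs : blockStart B (i+1) = blockStart B i + (B.get ⟨i, hikt⟩).len + 1 :=
      blockStart_succ' B i hikt
    rw [← hLEN _ hikt] at hSs
    refine ⟨k₀, hNFk.1, hkik, hikt, hbl1, hNF2, by omega, by omega, by omega, by omega,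
      hqle, hqW, hq1, by omega⟩
  -- pair inequality
  have hpair : ∀ a ∈ marked, ∀ b ∈ marked, a < b → Dδ a = Dδ b → Rf a = Rf b → False := by
    intro a ha b hb hab hD hR
    obtain ⟨ka, hka1, hka2, hat, hA1, hA2, hA3, hA4, hA5, hA6, hA7, hA8, hA9, hA10⟩ := hMK a ha
    obtain ⟨kb, hkb1, hkb2, hbt, hB1, hB2, hB3, hB4, hB5, hB6, hB7, hB8, hB9, hB10⟩ := hMK b hb
    have hii' : blockStart B (a+1) ≤ blockStart B b := blockStart_mono B (by omega)
    apply pairLemma (i := a) (i' := b) (kb := kb) (δa := Dδ a) (δb := Dδ b) (Rb := Rf b)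
      hB hB' hww' hat hbt hkb1 hii'
      (by rw [← hQ _ hat]; exact hA5) (by rw [← hLEN _ hat]; exact hA6)
      (by rw [← hQ _ hbt]; exact hB5) (by rw [← hLEN _ hbt]; exact hB6)
      hB1 hB2 hB3 hB4 (by omega) (by rw [← hLEN _ hat]; omega)
  -- the pairs are distinct
  have hinj2 : Set.InjOn (fun i => (Dδ i, Rf i)) marked := by
    intro a ha b hb hab
    simp only [Finset.mem_coe] at ha hb
    simp only [Prod.mk.injEq] at hab
    rcases lt_trichotomy a b with h | h | h
    · exact (hpair a ha b hb h hab.1 hab.2).elim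
    · exact h
    · exact (hpair b hb a ha h hab.1.symm hab.2.symm).elim
  -- budget
  have hmbound : (m : ℝ) ≤ 1 + 2 * (W : ℝ) ^ ((2:ℝ)/3) := by
    rcases Finset.eq_empty_or_nonempty marked with hemp | hne
    · rw [hm, hemp]
      simp
      positivity
    · set im := marked.max' hne with him
      set i₁ := marked.min' hne with hi₁
      have himm : im ∈ marked := marked.max'_mem hne
      have hi₁m : i₁ ∈ marked := marked.min'_mem hne
      set cost : ℕ → ℕ := fun i => Dδ i + Rf i + 2 with hcost
      set g : ℕ → ℕ := fun i => if i ∈ marked.erase im then cost i else 0 with hg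
      have hstep : ∀ i, blockStart B i + g i ≤ blockStart B (i+1) := by
        intro i
        rw [hg]; simp only []
        by_cases hc : i ∈ marked.erase im
        · rw [if_pos hc]
          obtain ⟨k₀, _, _, hit, _, _, _, _, _, hlt, _, _, _, hnew⟩ :=
            hMK i (Finset.mem_of_mem_erase hc)
          have hSs : blockStart B (i+1) = blockStart B i + (B.get ⟨i, hit⟩).len + 1 :=
            blockStart_succ' B i hit
          rw [← hLEN _ hit] at hSs
          rw [hcost]
          simp only []
          omega
        · rw [if_neg hc]
          have : blockStart B i ≤ blockStart B (i+1) := blockStart_mono B (by omega)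
          omega
      have htele : blockStart B i₁ + ∑ i ∈ Finset.Ico i₁ im, g i ≤ blockStart B im :=
        tele _ _ hstep i₁ im (marked.min'_le _ himm)
      have hsubset : marked.erase im ⊆ Finset.Ico i₁ im := by
        intro x hx
        rw [Finset.mem_Ico]
        have hx1 := Finset.mem_of_mem_erase hx
        have hx2 := Finset.ne_of_mem_erase hx
        have := marked.min'_le _ hx1
        have := marked.le_max' _ hx1
        constructor
        · omega
        · omega
      have hsum_eq : ∑ i ∈ Finset.Ico i₁ im, g i = ∑ i ∈ marked.erase im, cost i := by
        rw [hg]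
        rw [Finset.sum_ite_mem]
        congr 1
        rw [Finset.inter_eq_right.2 hsubset]
      have hSi₁ : j + 1 ≤ blockStart B i₁ := by
        obtain ⟨_, _, _, _, _, _, _, _, hY5, hY6, hY7, _, _, _⟩ := hMK i₁ hi₁m
        omega
      have hSim : blockStart B im ≤ j + W := by
        obtain ⟨_, _, _, _, _, _, _, _, hY5, hY6, hY7, hY8, _, _⟩ := hMK im himm
        omega
      have hbudget : ∑ i ∈ marked.erase im, cost i ≤ W := by omega
      set P : Finset (ℕ × ℕ) := (marked.erase im).image (fun i => (Dδ i, Rf i)) with hP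
      have hPcard : P.card = m - 1 := by
        rw [hP, Finset.card_image_of_injOn (hinj2.mono (by
          intro x hx
          exact Finset.mem_of_mem_erase hx))]
        rw [Finset.card_erase_of_mem himm, hm]
      have hPsum : ∑ p ∈ P, (p.1 + p.2 + 2) = ∑ i ∈ marked.erase im, cost i := by
        rw [hP]
        rw [Finset.sum_image (by
          intro x hx y hy hxy
          exact hinj2 (Finset.mem_of_mem_erase hx) (Finset.mem_of_mem_erase hy) hxy)]
      have hPbound := countPairs P W (by omega)
      have hm1 : (1:ℕ) ≤ m := by
        rw [hm]
        exact Finset.card_pos.2 hne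
      have : ((m - 1 : ℕ) : ℝ) ≤ 2 * (W : ℝ) ^ ((2:ℝ)/3) := by
        rw [← hPcard]; exact hPbound
      have hcast : ((m - 1 : ℕ) : ℝ) = (m : ℝ) - 1 := by
        rw [Nat.cast_sub hm1]; norm_num
      linarith [hcast ▸ this]
  -- conclude
  have hcR : (t' : ℝ) ≤ (t : ℝ) + 1 + (m : ℝ) := by exact_mod_cast hcount
  rw [ht, ht'] at hcR ⊢
  linarith
end Scratch6


/-- Theorem: upper bound on the global sensitivity of LZ77 with
sliding window size `W ≤ n`. Over a finite alphabet `Σ`, for every pair of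
neighboring strings `w ∼ w' ∈ Σⁿ` (so the global sensitivity obeys the same
bound),
`||Compress(w)| − |Compress(w')|| ≤ ((∛81/2)·W^(2/3) + (∛9/2)·W^(1/3) + 3)·(2⌈log₂ n⌉ + ⌈log₂ |Σ|⌉)`. -/
theorem lz77_global_sensitivity_upper_window {α : Type*} [Fintype α]
    (W n : ℕ) (hW : W ≤ n) :
    ∀ w w' : ℕ → α, Neighbor n w w' →
    ∀ B B' : List (LZBlock α),
      IsLZ77Parse W n w B → IsLZ77Parse W n w' B' →
      ((((B.length : ℤ) * (codeLen n (Fintype.card α) : ℤ)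
          - (B'.length : ℤ) * (codeLen n (Fintype.card α) : ℤ)).natAbs : ℝ))
        ≤ ((81 : ℝ) ^ ((1 : ℝ) / 3) / 2 * (W : ℝ) ^ ((2 : ℝ) / 3)
            + (9 : ℝ) ^ ((1 : ℝ) / 3) / 2 * (W : ℝ) ^ ((1 : ℝ) / 3) + 3)
          * (codeLen n (Fintype.card α) : ℝ) := by
  intro w w' hN B B' hB hB'
  obtain ⟨j, hj1, hjn, hne, hsame⟩ := hN
  have d1 : (B'.length : ℝ) ≤ (B.length : ℝ) + 2 + 2 * (W : ℝ) ^ ((2:ℝ)/3) :=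
    Scratch6.direction hj1 hsame hB hB'
  have d2 : (B.length : ℝ) ≤ (B'.length : ℝ) + 2 + 2 * (W : ℝ) ^ ((2:ℝ)/3) :=
    Scratch6.direction hj1 (fun x hx => (hsame x hx).symm) hB' hB
  set c := codeLen n (Fintype.card α) with hc
  have hc0 : (0:ℝ) ≤ (c:ℝ) := Nat.cast_nonneg c
  have hWnn : (0:ℝ) ≤ (W:ℝ) := Nat.cast_nonneg W
  have hW23 : (0:ℝ) ≤ (W : ℝ) ^ ((2:ℝ)/3) := Real.rpow_nonneg hWnn _
  have hW13 : (0:ℝ) ≤ (W : ℝ) ^ ((1:ℝ)/3) := Real.rpow_nonneg hWnn _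
  have h81 : (4:ℝ) ≤ (81 : ℝ) ^ ((1:ℝ)/3) := by
    have h1 : ((64:ℝ)) ^ ((1:ℝ)/3) ≤ (81:ℝ) ^ ((1:ℝ)/3) :=
      Real.rpow_le_rpow (by norm_num) (by norm_num) (by norm_num)
    have h2 : ((64:ℝ)) ^ ((1:ℝ)/3) = 4 := by
      rw [show (64:ℝ) = (4:ℝ)^(3:ℕ) by norm_num, ← Real.rpow_natCast (4:ℝ) 3,
        ← Real.rpow_mul (by norm_num)]
      norm_num
    linarith
  have h9 : (0:ℝ) ≤ (9 : ℝ) ^ ((1:ℝ)/3) := by positivity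
  have habs : |(B.length : ℝ) - (B'.length : ℝ)| ≤ 2 + 2 * (W : ℝ) ^ ((2:ℝ)/3) :=
    abs_sub_le_iff.2 ⟨by linarith, by linarith⟩
  have hDK : 2 + 2 * (W : ℝ) ^ ((2:ℝ)/3) ≤
      (81 : ℝ) ^ ((1 : ℝ) / 3) / 2 * (W : ℝ) ^ ((2 : ℝ) / 3)
        + (9 : ℝ) ^ ((1 : ℝ) / 3) / 2 * (W : ℝ) ^ ((1 : ℝ) / 3) + 3 := by
    nlinarith [mul_nonneg h9 hW13, mul_le_mul_of_nonneg_right h81 hW23]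
  have hcastabs : (((((B.length : ℤ) * (c : ℤ) - (B'.length : ℤ) * (c : ℤ)).natAbs : ℕ)) : ℝ)
      = |(B.length : ℝ) - (B'.length : ℝ)| * (c:ℝ) := by
    rw [Nat.cast_natAbs]
    push_cast
    rw [← sub_mul, abs_mul, abs_of_nonneg hc0]
  rw [hcastabs]
  calc |(B.length : ℝ) - (B'.length : ℝ)| * (c:ℝ)
      ≤ (2 + 2 * (W : ℝ) ^ ((2:ℝ)/3)) * (c:ℝ) := mul_le_mul_of_nonneg_right habs hc0
    _ ≤ _ := mul_le_mul_of_nonneg_right hDK hc0
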